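/- The 2-valued function f : ℂ → A_2(ℂ) given by f(z) = δ_{z^{3/2}} + δ_{−z^{3/2}} (where z^{3/2} denotes either branch; the multiset is well-defined) is continuous, but there is no neighborhood U of 0 on which f admits a decomposition f = δ_{g₁} + δ_{g₂} with g₁, g₂ : U → ℂ continuous. -/

import Mathlib

/-!
Continuity: for the symmetric pairs `{a, -a}` and `{b, -b}` the two matchings cost `√2 ‖a - b‖`
and `√2 ‖a + b‖`, so their distance is at most the geometric mean `√(2 ‖a² - b²‖)`, which only
sees the squares `(z^{3/2})² = z³`.

No selection: along `θ ↦ r e^{iθ}` a continuous branch `g` and `√(r³) e^{3iθ/2}` are continuous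
square roots of the same nonvanishing function on the connected line, so they agree up to one
global sign. But the latter changes sign after a full turn, while `g` returns to its value.
-/

open Metric MeasureTheory Set Filter Topology ENNReal NNReal

/-- The Wasserstein-type metric on (representatives of) unordered `Q`-tuples of points of `M`:
`G(a, b) = min over permutations σ of sqrt (∑ d(aᵢ, b_{σ i})²)`. -/
noncomputable def QDist {M : Type*} [MetricSpace M] {Q : ℕ} (a b : Fin Q → M) : ℝ :=
  ⨅ σ : Equiv.Perm (Fin Q), Real.sqrt (∑ i, dist (a i) (b (σ i)) ^ 2)

/-- The two-valued function `z ↦ δ_{z^{3/2}} + δ_{−z^{3/2}}` (principal branch; the unordered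
pair does not depend on the branch). -/
noncomputable def ftv (z : ℂ) : Fin 2 → ℂ := ![z ^ ((3 : ℂ) / 2), -(z ^ ((3 : ℂ) / 2))]

section QDist

variable {M : Type*} [MetricSpace M] {Q : ℕ}

lemma QDist_nonneg (a b : Fin Q → M) : 0 ≤ QDist a b :=
  Real.iInf_nonneg fun _ => Real.sqrt_nonneg _

lemma QDist_le (a b : Fin Q → M) (σ : Equiv.Perm (Fin Q)) :
    QDist a b ≤ Real.sqrt (∑ i, dist (a i) (b (σ i)) ^ 2) :=
  ciInf_le (Finite.bddBelow_range _) σ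

end QDist

section SymmetricPair

variable {R : Type*} [NormedField R]

lemma QDist_pair_neg_le_sub (a b : R) :
    QDist ![a, -a] ![b, -b] ≤ Real.sqrt 2 * ‖a - b‖ := by
  refine (QDist_le _ _ 1).trans_eq ?_
  simp only [Fin.sum_univ_two, Equiv.Perm.one_apply, Matrix.cons_val_zero, Matrix.cons_val_one,
    dist_neg_neg]
  rw [← two_mul, Real.sqrt_mul zero_le_two, Real.sqrt_sq dist_nonneg, dist_eq_norm]

lemma QDist_pair_neg_le_add (a b : R) :
    QDist ![a, -a] ![b, -b] ≤ Real.sqrt 2 * ‖a + b‖ := by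
  refine (QDist_le _ _ (Equiv.swap 0 1)).trans_eq ?_
  simp only [Fin.sum_univ_two, Equiv.swap_apply_left, Equiv.swap_apply_right,
    Matrix.cons_val_zero, Matrix.cons_val_one, dist_eq_norm, sub_neg_eq_add, ← neg_add',
    norm_neg]
  rw [← two_mul, Real.sqrt_mul zero_le_two, Real.sqrt_sq (norm_nonneg _)]

lemma QDist_pair_neg_le_sqrt (a b : R) :
    QDist ![a, -a] ![b, -b] ≤ Real.sqrt (2 * ‖a ^ 2 - b ^ 2‖) := by
  refine Real.le_sqrt_of_sq_le ?_
  calc QDist ![a, -a] ![b, -b] ^ 2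
      ≤ (Real.sqrt 2 * ‖a - b‖) * (Real.sqrt 2 * ‖a + b‖) := by
        rw [sq]
        exact mul_le_mul (QDist_pair_neg_le_sub a b) (QDist_pair_neg_le_add a b)
          (QDist_nonneg _ _) (by positivity)
    _ = 2 * ‖a ^ 2 - b ^ 2‖ := by
        rw [mul_mul_mul_comm, Real.mul_self_sqrt zero_le_two, ← norm_mul, mul_comm (a - b),
          ← sq_sub_sq]

lemma tendsto_QDist_pair_neg {X : Type*} [TopologicalSpace X] {f : X → R} {x₀ : X}
    (hf : ContinuousAt (fun x => f x ^ 2) x₀) :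
    Tendsto (fun x => QDist ![f x, -f x] ![f x₀, -f x₀]) (𝓝 x₀) (𝓝 0) := by
  refine squeeze_zero (fun x => QDist_nonneg _ _) (fun x => QDist_pair_neg_le_sqrt _ _) ?_
  have hbound : ContinuousAt (fun x => Real.sqrt (2 * ‖f x ^ 2 - f x₀ ^ 2‖)) x₀ := by fun_prop
  simpa using hbound.tendsto

end SymmetricPair

section Circle

open Real

lemma circleMap_zero_nat_mul_pi_of_odd {n : ℕ} (hn : Odd n) (R : ℝ) :
    circleMap 0 R (n * π) = -R := by
  obtain ⟨k, rfl⟩ := hn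
  rw [show ((2 * k + 1 : ℕ) : ℝ) * π = π + k * (2 * π) by push_cast; ring,
    (periodic_circleMap 0 R).nat_mul k π, circleMap_zero, Complex.exp_pi_mul_I, mul_neg_one]

theorem not_exists_continuousOn_sq_eq_pow_of_odd {n : ℕ} (hn : Odd n) {r : ℝ} (hr : 0 < r) :
    ¬ ∃ g : ℂ → ℂ, ContinuousOn g (sphere 0 r) ∧ ∀ z ∈ sphere (0 : ℂ) r, g z ^ 2 = z ^ n := by
  rintro ⟨g, hg, hsq⟩
  obtain ⟨ρ, hρ, hρ_sq⟩ : ∃ ρ : ℝ, ρ ≠ 0 ∧ ρ ^ 2 = r ^ n :=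
    ⟨√(r ^ n), (Real.sqrt_pos.2 (pow_pos hr n)).ne', Real.sq_sqrt (pow_nonneg hr.le n)⟩
  set G : ℝ → ℂ := fun θ => circleMap 0 ρ (n * θ / 2)
  have hG_sq : ∀ θ, G θ ^ 2 = circleMap 0 r θ ^ n := by
    intro θ
    simp only [G, circleMap_zero_pow, hρ_sq]
    congr 1
    push_cast
    ring
  have hG_zero : G 0 = ρ := by simp [G, circleMap_zero]
  have hG_two_pi : G (2 * π) = -ρ := by
    simp only [G]
    rw [show (n : ℝ) * (2 * π) / 2 = n * π by ring, circleMap_zero_nat_mul_pi_of_odd hn]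
  have hf : Continuous (g ∘ circleMap 0 r) :=
    hg.comp_continuous (continuous_circleMap 0 r) (circleMap_mem_sphere 0 hr.le)
  have hG : Continuous G := (continuous_circleMap 0 ρ).comp (by fun_prop)
  have hperiodic : (g ∘ circleMap 0 r) (2 * π) = (g ∘ circleMap 0 r) 0 :=
    congrArg g (periodic_circleMap 0 r).eq
  rcases isPreconnected_univ.eq_or_eq_neg_of_sq_eq hf.continuousOn hG.continuousOn
    (fun θ _ => by simp [hsq _ (circleMap_mem_sphere 0 hr.le θ), hG_sq])
    (fun _ => circleMap_ne_center hρ) with h | h <;>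
  · rw [h (mem_univ _), h (mem_univ _)] at hperiodic
    simp only [Pi.neg_apply, neg_inj, hG_zero, hG_two_pi] at hperiodic
    exact hρ (Complex.ofReal_eq_zero.1 (by linear_combination -hperiodic / 2))

end Circle

lemma cpow_three_halves_sq (z : ℂ) : (z ^ ((3 : ℂ) / 2)) ^ 2 = z ^ 3 := by
  rcases eq_or_ne z 0 with rfl | hz
  · rw [Complex.zero_cpow (by norm_num)]
    ring
  · rw [sq, ← Complex.cpow_add _ _ hz]
    norm_num

lemma ftv_sq (z : ℂ) (i : Fin 2) : ftv z i ^ 2 = z ^ 3 := by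
  fin_cases i <;> simp [ftv, cpow_three_halves_sq]

/-- the 2-valued function `z ↦ δ_{z^{3/2}} + δ_{−z^{3/2}}` is continuous (as a
map to `A_2(ℂ)` with the Wasserstein metric), but on no neighborhood `U` of `0` does it admit
a decomposition into two continuous single-valued branches `g₁, g₂ : U → ℂ`. -/
theorem stmt19 :
    (∀ z₀ : ℂ, Filter.Tendsto (fun z => QDist (ftv z) (ftv z₀)) (nhds z₀) (nhds 0)) ∧
    ¬ ∃ U ∈ nhds (0 : ℂ), ∃ g₁ g₂ : ℂ → ℂ, ContinuousOn g₁ U ∧ ContinuousOn g₂ U ∧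
      ∀ z ∈ U, (g₁ z = ftv z 0 ∧ g₂ z = ftv z 1) ∨ (g₁ z = ftv z 1 ∧ g₂ z = ftv z 0) := by
  constructor
  · intro z₀
    refine tendsto_QDist_pair_neg (f := fun z : ℂ => z ^ ((3 : ℂ) / 2)) ?_
    simpa only [cpow_three_halves_sq] using (continuous_pow 3).continuousAt
  · rintro ⟨U, hU, g₁, _, hg₁, _, hsel⟩
    obtain ⟨r, hr, hball⟩ := nhds_basis_closedBall.mem_iff.mp hU
    have hsphere : sphere (0 : ℂ) r ⊆ U := sphere_subset_closedBall.trans hball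
    refine not_exists_continuousOn_sq_eq_pow_of_odd (n := 3) (by decide) hr
      ⟨g₁, hg₁.mono hsphere, fun z hz => ?_⟩
    rcases hsel z (hsphere hz) with ⟨h, -⟩ | ⟨h, -⟩ <;> rw [h, ftv_sq]
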